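/- Composition formula: let a : ℕ → ℚ be a sequence indexed from 1 with a_1 = 1, and let k_1, k_2 ≥ 1 be natural numbers. Define the sequence x by x_m = m·B(m−1+k_2, k_2; a)/C(m−1+k_2, k_2) for m ≥ 1. Then for all n ≥ k_1, B(n, k_1; x) = C(n, k_1)·B(n−k_1+k_1·k_2, k_1·k_2; a)/C(n−k_1+k_1·k_2, k_1·k_2), where C denotes the binomial coefficient. -/

import Mathlib

open Finset BigOperators

noncomputable def bW (a : ℕ → ℚ) {N : ℕ} (j : Fin N → ℕ) : ℚ :=
  ∏ i, a (i.1 + 1) ^ (j i) / (((j i).factorial * ((i.1 + 1).factorial) ^ (j i) : ℕ) : ℚ)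

def bCond (n k : ℕ) {N : ℕ} (j : Fin N → ℕ) : Prop :=
  (∑ i, j i) = k ∧ (∑ i, (i.1 + 1) * j i) = n

instance (n k N : ℕ) (j : Fin N → ℕ) : Decidable (bCond n k j) := by
  unfold bCond; infer_instance

noncomputable def bQ (a : ℕ → ℚ) (N M n k : ℕ) : ℚ :=
  ∑ j ∈ Fintype.piFinset (fun _ : Fin N => Finset.range (M + 1)),
    if bCond n k j then bW a j else 0

/-- The partial Bell polynomial value `B(n,k;a)`. -/
noncomputable def partialBell (a : ℕ → ℚ) (n k : ℕ) : ℚ :=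
  ∑ j : Fin n → Fin (n + 1),
    if (∑ i, (j i : ℕ)) = k ∧ (∑ i, (i.1 + 1) * (j i : ℕ)) = n then
      (n.factorial : ℚ) /
          ((∏ i, (j i : ℕ).factorial * ((i.1 + 1).factorial) ^ (j i : ℕ) : ℕ) : ℚ) *
        ∏ i, a (i.1 + 1) ^ (j i : ℕ)
    else 0

lemma partialBell_eq (a : ℕ → ℚ) (n k : ℕ) :
    partialBell a n k = n.factorial * bQ a n n n k := by
  rw [bQ, Finset.mul_sum, partialBell]
  apply Finset.sum_nbij' (i := fun (j : Fin n → Fin (n+1)) => (fun i => (j i : ℕ)))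
    (j := fun (j : Fin n → ℕ) => (fun i => (⟨j i % (n+1), Nat.mod_lt _ (Nat.succ_pos n)⟩ : Fin (n+1))))
  · intro j _; simp [Fintype.mem_piFinset, Nat.lt_succ_iff, Fin.is_le]
  · intro j _; simp
  · intro j _
    funext i
    exact Fin.ext (Nat.mod_eq_of_lt (j i).isLt)
  · intro j hj
    funext i
    simp only [Fintype.mem_piFinset, Finset.mem_range, Nat.lt_succ_iff] at hj
    exact Nat.mod_eq_of_lt (Nat.lt_succ_of_le (hj i))
  · intro j _
    simp only [bCond]
    split_ifs with h
    · rw [bW, Finset.prod_div_distrib]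
      rw [Nat.cast_prod]
      ring
    · rw [mul_zero]

lemma bCond_le {n k N : ℕ} {j : Fin N → ℕ} (h : bCond n k j) (i : Fin N) : j i ≤ n := by
  obtain ⟨-, h2⟩ := h
  calc j i ≤ (i.1 + 1) * j i := Nat.le_mul_of_pos_left _ (Nat.succ_pos _)
    _ ≤ ∑ l, (l.1 + 1) * j l := Finset.single_le_sum (f := fun l : Fin N => (l.1 + 1) * j l)
      (fun l _ => Nat.zero_le _) (Finset.mem_univ i)
    _ = n := h2

lemma bQ_M_mono (a : ℕ → ℚ) (N M M' n k : ℕ) (hM : n ≤ M) (hM' : M ≤ M') :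
    bQ a N M n k = bQ a N M' n k := by
  rw [bQ, bQ]
  apply Finset.sum_subset
  · intro j hj
    simp only [Fintype.mem_piFinset, Finset.mem_range] at hj ⊢
    exact fun i => lt_of_lt_of_le (hj i) (by omega)
  · intro j _ hj
    rw [if_neg]
    intro h
    simp only [Fintype.mem_piFinset, Finset.mem_range, not_forall, not_lt] at hj
    obtain ⟨i, hi⟩ := hj
    exact absurd (bCond_le h i) (by omega)

lemma bQ_N_succ (a : ℕ → ℚ) (N M n k : ℕ) (hN : n ≤ N) :
    bQ a (N + 1) M n k = bQ a N M n k := by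
  rw [bQ, bQ]
  rw [← Finset.sum_subset (s₁ := (Fintype.piFinset (fun _ : Fin (N+1) => Finset.range (M + 1))).filter
      (fun j => j (Fin.last N) = 0)) (Finset.filter_subset _ _)]
  · apply Finset.sum_nbij' (i := fun (j : Fin (N+1) → ℕ) => j ∘ Fin.castSucc)
      (j := fun (j : Fin N → ℕ) => Fin.snoc j 0)
    · intro j hj
      simp only [Finset.mem_filter, Fintype.mem_piFinset] at hj ⊢
      exact fun i => hj.1 _
    · intro j hj
      simp only [Finset.mem_filter, Fintype.mem_piFinset, Finset.mem_range] at hj ⊢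
      constructor
      · intro i
        induction i using Fin.lastCases with
        | last => simp [Fin.snoc_last]
        | cast i => simpa [Fin.snoc_castSucc] using hj i
      · simp [Fin.snoc_last]
    · intro j hj
      simp only [Finset.mem_filter] at hj
      funext i
      induction i using Fin.lastCases with
      | last => simp [Fin.snoc_last, hj.2]
      | cast i => simp [Fin.snoc_castSucc]
    · intro j _
      funext i
      simp [Fin.snoc_castSucc]
    · intro j hj
      simp only [Finset.mem_filter] at hj
      have h0 : j (Fin.last N) = 0 := hj.2
      have hc : bCond n k (j ∘ Fin.castSucc) ↔ bCond n k j := by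
        simp only [bCond, Function.comp]
        rw [Fin.sum_univ_castSucc, Fin.sum_univ_castSucc (f := fun i => (i.1 + 1) * j i), h0]
        simp
      have hw : bW a j = bW a (j ∘ Fin.castSucc) := by
        rw [bW, bW, Fin.prod_univ_castSucc]
        simp [h0, Function.comp]
      rw [hw]
      exact if_congr hc.symm rfl rfl
  · intro j hj hj2
    rw [if_neg]
    intro h
    simp only [Finset.mem_filter, hj, true_and] at hj2
    have := h.2
    have hle : (N + 1) * j (Fin.last N) ≤ n := by
      rw [← this]
      exact Finset.single_le_sum (f := fun l : Fin (N+1) => (l.1 + 1) * j l)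
        (fun l _ => Nat.zero_le _) (Finset.mem_univ (Fin.last N))
    have : j (Fin.last N) = 0 := by nlinarith [Nat.pos_of_ne_zero hj2]
    exact hj2 this

lemma bQ_eq (a : ℕ → ℚ) (N M n k : ℕ) (hN : n ≤ N) (hM : n ≤ M) :
    bQ a N M n k = bQ a n n n k := by
  have hNred : ∀ d, bQ a (n + d) M n k = bQ a n M n k := by
    intro d
    induction d with
    | zero => rfl
    | succ d ih => rw [← Nat.add_assoc, bQ_N_succ a (n + d) M n k (by omega), ih]
  have : N = n + (N - n) := by omega
  rw [this, hNred (N - n), bQ_M_mono a n n M n k le_rfl hM]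

lemma bW_update (a : ℕ → ℚ) {N : ℕ} (j : Fin N → ℕ) (i : Fin N) (h : 0 < j i) :
    (j i : ℚ) * bW a j =
      a (i.1 + 1) / ((i.1 + 1).factorial : ℚ) * bW a (Function.update j i (j i - 1)) := by
  obtain ⟨t, ht⟩ : ∃ t, j i = t + 1 := ⟨j i - 1, by omega⟩
  rw [bW, bW, ← Finset.mul_prod_erase _ _ (Finset.mem_univ i),
    ← Finset.mul_prod_erase _ _ (Finset.mem_univ i)]
  have hrest : ∀ l ∈ Finset.univ.erase i,
      a (l.1 + 1) ^ (Function.update j i (j i - 1) l) /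
        (((Function.update j i (j i - 1) l).factorial * ((l.1 + 1).factorial) ^ (Function.update j i (j i - 1) l) : ℕ) : ℚ)
      = a (l.1 + 1) ^ (j l) / (((j l).factorial * ((l.1 + 1).factorial) ^ (j l) : ℕ) : ℚ) := by
    intro l hl
    rw [Function.update_of_ne (Finset.ne_of_mem_erase hl)]
  rw [Finset.prod_congr rfl hrest]
  rw [Function.update_self, ht]
  have h1 : (t + 1 - 1) = t := by omega
  rw [h1]
  have hf : (((i.1 + 1).factorial : ℚ)) ≠ 0 := Nat.cast_ne_zero.2 (Nat.factorial_ne_zero _)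
  have hft : (((i.1 + 1).factorial : ℚ)) ^ t ≠ 0 := pow_ne_zero _ hf
  have htf : ((t.factorial : ℚ)) ≠ 0 := Nat.cast_ne_zero.2 (Nat.factorial_ne_zero _)
  push_cast [Nat.factorial_succ, pow_succ]
  field_simp

lemma wsum_update {N : ℕ} (j : Fin N → ℕ) (i : Fin N) (b : ℕ) :
    ∑ l : Fin N, (l.1 + 1) * (Function.update j i b l)
      = (i.1 + 1) * b + ∑ l ∈ Finset.univ.erase i, (l.1 + 1) * j l := by
  rw [← Finset.add_sum_erase _ _ (Finset.mem_univ i), Function.update_self]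
  congr 1
  apply Finset.sum_congr rfl
  intro l hl
  rw [Function.update_of_ne (Finset.ne_of_mem_erase hl)]

lemma bQ_inner (a : ℕ → ℚ) (N M n k : ℕ) (hM : n ≤ M) (i : Fin N) :
    (∑ j ∈ Fintype.piFinset (fun _ : Fin N => Finset.range (M + 1)),
      if bCond n (k + 1) j then (j i : ℚ) * bW a j else 0)
    = if i.1 + 1 ≤ n then
        a (i.1 + 1) / ((i.1 + 1).factorial : ℚ) * bQ a N M (n - (i.1 + 1)) k else 0 := by
  by_cases hi : i.1 + 1 ≤ n
  · rw [if_pos hi, bQ, Finset.mul_sum]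
    have hL : ∀ j ∈ Fintype.piFinset (fun _ : Fin N => Finset.range (M + 1)),
        (if bCond n (k + 1) j then (j i : ℚ) * bW a j else 0)
        = (if bCond n (k + 1) j ∧ 0 < j i then (j i : ℚ) * bW a j else 0) := by
      intro j _
      by_cases hc : bCond n (k + 1) j
      · by_cases hp : 0 < j i
        · rw [if_pos hc, if_pos ⟨hc, hp⟩]
        · rw [if_pos hc, if_neg (by tauto)]
          have : j i = 0 := by omega
          rw [this]; simp
      · rw [if_neg hc, if_neg (by tauto)]
    rw [Finset.sum_congr rfl hL]
    have hR : ∀ j ∈ Fintype.piFinset (fun _ : Fin N => Finset.range (M + 1)),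
        a (i.1 + 1) / ((i.1 + 1).factorial : ℚ) * (if bCond (n - (i.1 + 1)) k j then bW a j else 0)
        = (if bCond (n - (i.1 + 1)) k j then a (i.1 + 1) / ((i.1 + 1).factorial : ℚ) * bW a j else 0) := by
      intro j _; split_ifs <;> simp
    rw [Finset.sum_congr rfl hR]
    rw [Finset.sum_ite, Finset.sum_ite]
    simp only [Finset.sum_const_zero, add_zero]
    apply Finset.sum_nbij' (i := fun j => Function.update j i (j i - 1))
      (j := fun j => Function.update j i (j i + 1))
    · -- forward membership
      intro j hj
      simp only [Finset.mem_filter, Fintype.mem_piFinset, Finset.mem_range] at hj ⊢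
      obtain ⟨hpi, ⟨hs, hw⟩, hp⟩ := hj
      obtain ⟨t, ht⟩ : ∃ t, j i = t + 1 := ⟨j i - 1, by omega⟩
      refine ⟨?_, ?_, ?_⟩
      · intro l
        by_cases hl : l = i
        · subst hl; rw [Function.update_self]; have := hpi l; omega
        · rw [Function.update_of_ne hl]; exact hpi l
      · rw [Finset.sum_update_of_mem (Finset.mem_univ i)]
        rw [← Finset.add_sum_erase _ _ (Finset.mem_univ i)] at hs
        rw [Finset.sdiff_singleton_eq_erase]
        omega
      · rw [wsum_update]
        rw [← Finset.add_sum_erase _ _ (Finset.mem_univ i)] at hw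
        rw [ht] at hw ⊢
        have h2 : (i.1 + 1) * (t + 1) = (i.1 + 1) * t + (i.1 + 1) := by ring
        have h3 : t + 1 - 1 = t := by omega
        rw [h3]
        omega
    · -- backward membership
      intro j hj
      simp only [Finset.mem_filter, Fintype.mem_piFinset, Finset.mem_range] at hj ⊢
      obtain ⟨hpi, hs, hw⟩ := hj
      have hbound : (i.1 + 1) * j i ≤ n - (i.1 + 1) := by
        rw [← hw]
        exact Finset.single_le_sum (f := fun l : Fin N => (l.1 + 1) * j l)
          (fun l _ => Nat.zero_le _) (Finset.mem_univ i)
      have hji : j i + 1 ≤ n := by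
        have h4 : j i ≤ (i.1 + 1) * j i := Nat.le_mul_of_pos_left _ (Nat.succ_pos _)
        omega
      refine ⟨?_, ⟨?_, ?_⟩, ?_⟩
      · intro l
        by_cases hl : l = i
        · subst hl; rw [Function.update_self]; omega
        · rw [Function.update_of_ne hl]; exact hpi l
      · rw [Finset.sum_update_of_mem (Finset.mem_univ i)]
        rw [← Finset.add_sum_erase _ _ (Finset.mem_univ i)] at hs
        rw [Finset.sdiff_singleton_eq_erase]
        omega
      · rw [wsum_update]
        rw [← Finset.add_sum_erase _ _ (Finset.mem_univ i)] at hw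
        have h2 : (i.1 + 1) * (j i + 1) = (i.1 + 1) * j i + (i.1 + 1) := by ring
        omega
      · rw [Function.update_self]; omega
    · -- left inverse
      intro j hj
      simp only [Finset.mem_filter] at hj
      funext l
      by_cases hl : l = i
      · subst hl
        rw [Function.update_self, Function.update_self]
        have : 0 < j l := hj.2.2
        omega
      · simp [Function.update_of_ne hl]
    · -- right inverse
      intro j _
      funext l
      by_cases hl : l = i
      · subst hl
        rw [Function.update_self, Function.update_self]
        omega
      · simp [Function.update_of_ne hl]
    · -- values
      intro j hj
      simp only [Finset.mem_filter] at hj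
      exact bW_update a j i hj.2.2
  · rw [if_neg hi]
    apply Finset.sum_eq_zero
    intro j _
    by_cases hc : bCond n (k + 1) j
    · rw [if_pos hc]
      have : (i.1 + 1) * j i ≤ n := by
        rw [← hc.2]
        exact Finset.single_le_sum (f := fun l : Fin N => (l.1 + 1) * j l)
          (fun l _ => Nat.zero_le _) (Finset.mem_univ i)
      have : j i = 0 := by nlinarith
      rw [this]; simp
    · rw [if_neg hc]

lemma bQ_rec (a : ℕ → ℚ) (N M n k : ℕ) (hN : n ≤ N) (hM : n ≤ M) :
    ((k : ℚ) + 1) * bQ a N M n (k + 1)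
      = ∑ m ∈ Finset.range n,
          a (m + 1) / ((m + 1).factorial : ℚ) * bQ a N M (n - (m + 1)) k := by
  have step1 : ((k : ℚ) + 1) * bQ a N M n (k + 1)
      = ∑ j ∈ Fintype.piFinset (fun _ : Fin N => Finset.range (M + 1)),
          ∑ i : Fin N, (if bCond n (k + 1) j then (j i : ℚ) * bW a j else 0) := by
    rw [bQ, Finset.mul_sum]
    apply Finset.sum_congr rfl
    intro j _
    by_cases hc : bCond n (k + 1) j
    · rw [if_pos hc]
      simp only [if_pos hc]
      rw [← Finset.sum_mul]
      congr 1
      rw [← Nat.cast_sum, hc.1]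
      push_cast
      ring
    · simp [if_neg hc]
  rw [step1, Finset.sum_comm]
  have step4 : ∀ i : Fin N,
      (∑ j ∈ Fintype.piFinset (fun _ : Fin N => Finset.range (M + 1)),
        if bCond n (k + 1) j then (j i : ℚ) * bW a j else 0)
      = if i.1 + 1 ≤ n then
          a (i.1 + 1) / ((i.1 + 1).factorial : ℚ) * bQ a N M (n - (i.1 + 1)) k else 0 :=
    fun i => bQ_inner a N M n k hM i
  rw [Finset.sum_congr rfl (fun i _ => step4 i)]
  rw [Fin.sum_univ_eq_sum_range (fun m => if m + 1 ≤ n then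
      a (m + 1) / ((m + 1).factorial : ℚ) * bQ a N M (n - (m + 1)) k else 0) N]
  rw [← Finset.sum_subset (Finset.range_subset_range.2 hN)]
  · apply Finset.sum_congr rfl
    intro m hm
    rw [if_pos (by simpa using Finset.mem_range.1 hm)]
  · intro m _ hm
    rw [if_neg (by simp at hm ⊢; omega)]

noncomputable def bQQ (a : ℕ → ℚ) (n k : ℕ) : ℚ := bQ a n n n k

lemma bQQ_zero (a : ℕ → ℚ) (n : ℕ) : bQQ a n 0 = if n = 0 then 1 else 0 := by
  rcases n with _ | n
  · rw [bQQ, bQ]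
    have hs : (Fintype.piFinset fun _ : Fin 0 => Finset.range 1) = {fun _ => 0} := by
      apply Finset.eq_singleton_iff_unique_mem.2
      refine ⟨Fintype.mem_piFinset.2 fun i => i.elim0, fun j _ => Subsingleton.elim _ _⟩
    rw [hs, Finset.sum_singleton, if_pos ⟨by simp, by simp⟩, bW]
    simp
  · rw [bQQ, bQ, if_neg (by omega)]
    apply Finset.sum_eq_zero
    intro j _
    rw [if_neg]
    rintro ⟨h1, h2⟩
    have hz : ∀ i ∈ Finset.univ, j i = 0 :=
      (Finset.sum_eq_zero_iff).1 h1
    rw [Finset.sum_congr rfl (fun i hi => by rw [hz i hi, Nat.mul_zero])] at h2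
    simp at h2

lemma bQQ_pos_k_zero (a : ℕ → ℚ) (k : ℕ) : bQQ a 0 (k + 1) = 0 := by
  rw [bQQ, bQ]
  apply Finset.sum_eq_zero
  intro j _
  rw [if_neg]
  rintro ⟨h1, -⟩
  simp at h1

lemma bell_series (a : ℕ → ℚ) (k : ℕ) :
    PowerSeries.mk (fun n => (k.factorial : ℚ) * bQQ a n k)
      = (PowerSeries.mk fun m => if m = 0 then 0 else a m / (m.factorial : ℚ)) ^ k := by
  induction k with
  | zero =>
    ext n
    simp [bQQ_zero, PowerSeries.coeff_one]
  | succ k ih =>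
    ext n
    rw [pow_succ', PowerSeries.coeff_mul, PowerSeries.coeff_mk]
    have hIH : ∀ q, PowerSeries.coeff q
        ((PowerSeries.mk fun m => if m = 0 then 0 else a m / (m.factorial : ℚ)) ^ k)
        = (k.factorial : ℚ) * bQQ a q k := by
      intro q; rw [← ih, PowerSeries.coeff_mk]
    rw [Finset.sum_congr rfl (fun p hp => by
      rw [PowerSeries.coeff_mk, hIH p.2])]
    rw [Finset.Nat.sum_antidiagonal_eq_sum_range_succ_mk]
    rw [Finset.sum_range_succ']
    have hlast : (if (0:ℕ) = 0 then (0:ℚ) else a 0 / ((Nat.factorial 0 : ℕ) : ℚ)) = 0 := by simp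
    rw [hlast, zero_mul, add_zero]
    have hstep : ((k + 1).factorial : ℚ) * bQQ a n (k + 1)
        = (k.factorial : ℚ) * (((k : ℚ) + 1) * bQ a n n n (k + 1)) := by
      rw [bQQ, Nat.factorial_succ]; push_cast; ring
    rw [hstep, bQ_rec a n n n k le_rfl le_rfl, Finset.mul_sum]
    apply Finset.sum_congr rfl
    intro m hm
    have hmn : m + 1 ≤ n := by have := Finset.mem_range.1 hm; omega
    have : bQ a n n (n - (m + 1)) k = bQQ a (n - (m + 1)) k := by
      rw [bQQ, bQ_eq a n n (n - (m + 1)) k (by omega) (by omega)]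
    rw [this, if_neg (by omega)]
    ring

lemma coeff_bell (a : ℕ → ℚ) (k n : ℕ) :
    PowerSeries.coeff n
      ((PowerSeries.mk fun m => if m = 0 then 0 else a m / (m.factorial : ℚ)) ^ k)
    = (k.factorial : ℚ) * bQQ a n k := by
  rw [← bell_series, PowerSeries.coeff_mk]

noncomputable def bG (a : ℕ → ℚ) : PowerSeries ℚ :=
  PowerSeries.mk fun t => a (t + 1) / ((t + 1).factorial : ℚ)

lemma f_eq_X_mul_g (a : ℕ → ℚ) :
    (PowerSeries.mk fun m => if m = 0 then 0 else a m / (m.factorial : ℚ))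
      = PowerSeries.X * bG a := by
  ext n
  rcases n with _ | t
  · simp [PowerSeries.coeff_zero_eq_constantCoeff, map_mul]
  · rw [PowerSeries.coeff_succ_X_mul, PowerSeries.coeff_mk, bG, PowerSeries.coeff_mk,
      if_neg (Nat.succ_ne_zero t)]

lemma coeff_g_pow (a : ℕ → ℚ) (c d : ℕ) :
    PowerSeries.coeff d ((bG a) ^ c) = (c.factorial : ℚ) * bQQ a (d + c) c := by
  have h := coeff_bell a c (d + c)
  rwa [f_eq_X_mul_g, mul_pow, PowerSeries.coeff_X_pow_mul] at h

/-- Composition formula: with `x_m = m·B(m−1+k₂,k₂;a)/C(m−1+k₂,k₂)`, one has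
`B(n,k₁;x) = C(n,k₁)·B(n−k₁+k₁k₂,k₁k₂;a)/C(n−k₁+k₁k₂,k₁k₂)` for `n ≥ k₁`. -/
theorem partialBell_composition (a : ℕ → ℚ) (ha : a 1 = 1)
    (k₁ k₂ : ℕ) (h₁ : 1 ≤ k₁) (h₂ : 1 ≤ k₂) (n : ℕ) (hn : k₁ ≤ n) :
    partialBell
        (fun m => (m : ℚ) * partialBell a (m - 1 + k₂) k₂ / ((m - 1 + k₂).choose k₂ : ℚ))
        n k₁ =
      (n.choose k₁ : ℚ) * partialBell a (n - k₁ + k₁ * k₂) (k₁ * k₂) /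
        ((n - k₁ + k₁ * k₂).choose (k₁ * k₂) : ℚ) := by
  set x : ℕ → ℚ :=
    fun m => (m : ℚ) * partialBell a (m - 1 + k₂) k₂ / ((m - 1 + k₂).choose k₂ : ℚ) with hxdef
  set c := k₁ * k₂ with hc
  -- the generating series of x
  have hx : (PowerSeries.mk fun m => if m = 0 then 0 else x m / (m.factorial : ℚ))
      = PowerSeries.X * (bG a) ^ k₂ := by
    ext m
    rcases m with _ | t
    · simp [PowerSeries.coeff_zero_eq_constantCoeff, map_mul]
    · rw [PowerSeries.coeff_succ_X_mul, PowerSeries.coeff_mk,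
        if_neg (Nat.succ_ne_zero t), coeff_g_pow]
      have ht1 : t + 1 - 1 = t := by omega
      have hB : partialBell a (t + k₂) k₂ = ((t + k₂).factorial : ℚ) * bQQ a (t + k₂) k₂ :=
        partialBell_eq a (t + k₂) k₂
      have hch : (((t + k₂).choose k₂ : ℕ) : ℚ)
          = ((t + k₂).factorial : ℚ) / ((k₂.factorial : ℚ) * (t.factorial : ℚ)) := by
        rw [Nat.cast_choose ℚ (Nat.le_add_left k₂ t)]
        rw [show t + k₂ - k₂ = t from by omega]
      have hfacs : ((t + 1).factorial : ℚ) = ((t : ℚ) + 1) * (t.factorial : ℚ) := by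
        rw [Nat.factorial_succ]; push_cast; ring
      rw [hxdef]
      simp only [ht1]
      rw [hB, hch, hfacs]
      have h1 : ((t + k₂).factorial : ℚ) ≠ 0 := Nat.cast_ne_zero.2 (Nat.factorial_ne_zero _)
      have h2 : (k₂.factorial : ℚ) ≠ 0 := Nat.cast_ne_zero.2 (Nat.factorial_ne_zero _)
      have h3 : (t.factorial : ℚ) ≠ 0 := Nat.cast_ne_zero.2 (Nat.factorial_ne_zero _)
      have h4 : ((t : ℚ) + 1) ≠ 0 := by positivity
      push_cast
      field_simp
  -- main coefficient identity
  have hmain : (k₁.factorial : ℚ) * bQQ x n k₁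
      = (c.factorial : ℚ) * bQQ a (n - k₁ + c) c := by
    have h := coeff_bell x k₁ n
    rw [hx, mul_pow, ← pow_mul, mul_comm k₂ k₁, ← hc] at h
    have hco : PowerSeries.coeff n (PowerSeries.X ^ k₁ * (bG a) ^ c)
        = (c.factorial : ℚ) * bQQ a (n - k₁ + c) c := by
      conv_lhs => rw [show n = (n - k₁) + k₁ from by omega]
      rw [PowerSeries.coeff_X_pow_mul, coeff_g_pow]
    rw [hco] at h
    exact h.symm
  set M := n - k₁ + c with hM
  have hcM : c ≤ M := by omega
  have hMc : M - c = n - k₁ := by omega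
  rw [partialBell_eq x n k₁, partialBell_eq a M c]
  have hQx : bQQ x n k₁ = (c.factorial : ℚ) * bQQ a M c / (k₁.factorial : ℚ) := by
    rw [eq_div_iff (Nat.cast_ne_zero.2 (Nat.factorial_ne_zero k₁))]
    rw [mul_comm (bQQ x n k₁)]
    exact hmain
  show (n.factorial : ℚ) * bQQ x n k₁
      = (n.choose k₁ : ℚ) * ((M.factorial : ℚ) * bQQ a M c) / ((M.choose c : ℚ))
  rw [hQx, Nat.cast_choose ℚ hn, Nat.cast_choose ℚ hcM, hMc]
  have h1 : (n.factorial : ℚ) ≠ 0 := Nat.cast_ne_zero.2 (Nat.factorial_ne_zero _)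
  have h2 : (k₁.factorial : ℚ) ≠ 0 := Nat.cast_ne_zero.2 (Nat.factorial_ne_zero _)
  have h3 : ((n - k₁).factorial : ℚ) ≠ 0 := Nat.cast_ne_zero.2 (Nat.factorial_ne_zero _)
  have h4 : (M.factorial : ℚ) ≠ 0 := Nat.cast_ne_zero.2 (Nat.factorial_ne_zero _)
  have h5 : (c.factorial : ℚ) ≠ 0 := Nat.cast_ne_zero.2 (Nat.factorial_ne_zero _)
  field_simp
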